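/- In the descending-slope extension construction, let x̄ ∈ C, y ∈ X, and k ∈ ℤ be such that ε_{k−2} ≤ d(x̄,y) < ε_{k−1}. Then (f(y) − f(x̄))₋ / d(x̄,y) ≤ S_k^−(x̄) + 3L·ε_{k−2}/ε_{k−1}, where t₋ denotes the negative part. -/

import Mathlib

/-!
Because `ε_{k-1} ≤ ε_k / 3`, the intervals `[ε_{k-2}, ε_{k-1}]` tile `(0, ∞)`, and on each of
them `pen_x` is affine with slope between `0` and `2L`. Two facts about `pen_x` then suffice.
First, `g x - g w ≤ S_{k-1}^-(x) d(x, w) ≤ pen_x (d(x, w))` for `w ∈ C` with `d(x, w)` in the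
`k`-th interval, hence `f(x̄) ≤ g(x̄)`. Second, the slopes of
`pen_x̄` increase with `k`, so a right-derivative mean value inequality from `pen_x̄(0) = 0` gives
`pen_x̄(d) ≤ (S_k^-(x̄) + 3L ε_{k-2}/ε_{k-1}) d` for `d < ε_{k-1}`. Together with
`f(y) ≥ g(x̄) - pen_x̄(d(x̄, y))` this is the claim; the uniform Lipschitz bound on the `pen_x`
only ensures that the supremum defining `f(y)` is finite.
-/

open Set Filter

theorem abs_sub_le_of_forall_hasDerivWithinAt_Ici {F : ℝ → ℝ} {a b M : ℝ} (hab : a ≤ b)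
    (hF : ContinuousOn F (Icc a b))
    (hF' : ∀ x ∈ Ioo a b, ∃ d, HasDerivWithinAt F d (Ici x) x ∧ |d| ≤ M) :
    |F b - F a| ≤ M * (b - a) := by
  rcases hab.eq_or_lt with rfl | hab
  · simp
  choose! F' hF'd hF'M using hF'
  have interior_bound : ∀ a' ∈ Ioo a b, |F b - F a'| ≤ M * (b - a') := fun a' ha' => by
    have hsub : Ico a' b ⊆ Ioo a b := fun x hx => ⟨ha'.1.trans_le hx.1, hx.2⟩
    simpa only [Real.norm_eq_abs] using norm_image_sub_le_of_norm_deriv_right_le_segment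
      (hF.mono (Icc_subset_Icc_left ha'.1.le)) (fun x hx => hF'd x (hsub hx))
      (fun x hx => hF'M x (hsub hx)) b (right_mem_Icc.2 ha'.2.le)
  have hFa : ContinuousWithinAt F (Ioo a b) a :=
    (hF a (left_mem_Icc.2 hab.le)).mono Ioo_subset_Icc_self
  exact (continuousWithinAt_const.sub hFa).abs.closure_le (by simp [closure_Ioo hab.ne, hab.le])
    (by fun_prop) interior_bound

section GeometricScale

variable {e : ℤ → ℝ} {c : ℝ}

theorem monotone_of_mul_le_succ (he : ∀ k, 0 < e k) (hc : 1 ≤ c)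
    (hstep : ∀ k, c * e (k - 1) ≤ e k) : Monotone e :=
  monotone_int_of_le_succ fun k =>
    (le_mul_of_one_le_left (he k).le hc).trans (by simpa using hstep (k + 1))

theorem exists_lt_of_mul_le_succ (he : ∀ k, 0 < e k) (hc : 1 < c)
    (hstep : ∀ k, c * e (k - 1) ≤ e k) (t : ℝ) : ∃ k, t < e k := by
  have : Tendsto (fun n : ℕ => e n) atTop atTop :=
    tendsto_atTop_of_geom_le (he 0) hc fun n => by simpa using hstep (n + 1)
  obtain ⟨n, hn⟩ := (this.eventually_gt_atTop t).exists
  exact ⟨n, hn⟩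

theorem exists_le_of_mul_le_succ (he : ∀ k, 0 < e k) (hc : 1 < c)
    (hstep : ∀ k, c * e (k - 1) ≤ e k) {t : ℝ} (ht : 0 < t) : ∃ k, e k ≤ t := by
  have : Tendsto (fun n : ℕ => (e (-n))⁻¹) atTop atTop := by
    refine tendsto_atTop_of_geom_le (by simpa using he 0) hc fun n => ?_
    have h := hstep (-n)
    rw [← div_eq_mul_inv, div_le_iff₀ (he _), mul_comm, ← div_eq_mul_inv, le_div_iff₀ (he _)]
    simpa [sub_eq_add_neg, add_comm] using h
  obtain ⟨n, hn⟩ := (this.eventually_gt_atTop t⁻¹).exists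
  exact ⟨-n, (inv_lt_inv₀ ht (he _)).1 hn |>.le⟩

theorem exists_mem_Ico_of_mul_le_succ (he : ∀ k, 0 < e k) (hc : 1 < c)
    (hstep : ∀ k, c * e (k - 1) ≤ e k) {t : ℝ} (ht : 0 < t) :
    ∃ k, e (k - 2) ≤ t ∧ t < e (k - 1) := by
  have hmono := monotone_of_mul_le_succ he hc.le hstep
  obtain ⟨m, hm⟩ := exists_lt_of_mul_le_succ he hc hstep t
  obtain ⟨k, hk, hmax⟩ := Int.exists_greatest_of_bdd
    ⟨m, fun k hk => (hmono.reflect_lt (hk.trans_lt hm)).le⟩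
    (exists_le_of_mul_le_succ he hc hstep ht)
  refine ⟨k + 2, by simpa using hk, ?_⟩
  by_contra! h
  have := hmax (k + 1) (by simpa [show k + 2 - 1 = k + 1 by ring] using h)
  omega

end GeometricScale

theorem three_mul_le_of_div_le {a b L ε : ℝ} (hb : 0 < b) (hL : 0 ≤ L) (hε : 0 < ε)
    (h : a / b ≤ ε / (3 * (L + ε))) : 3 * a ≤ b := by
  have h' : a / b ≤ 1 / 3 :=
    h.trans (by rw [div_le_div_iff₀ (by positivity) (by norm_num)]; linarith)
  rw [div_le_iff₀ hb] at h'
  linarith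

section PiecewiseAffine

variable {e : ℤ → ℝ} {F : ℝ → ℝ} {σ : ℤ → ℝ}

theorem hasDerivWithinAt_Ici_of_sub_eq_mul {m t b : ℝ} (htb : t < b)
    (h : ∀ u ∈ Icc t b, F u - F t = m * (u - t)) : HasDerivWithinAt F m (Ici t) t := by
  have haff : HasDerivWithinAt (fun u => F t + m * (u - t)) m (Ici t) t := by
    simpa using (((hasDerivWithinAt_id t (Ici t)).sub_const t).const_mul m).const_add (F t)
  refine haff.congr_of_eventuallyEq ?_ (by simp)
  filter_upwards [Icc_mem_nhdsGE htb] with u hu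
  linarith [h u hu]

theorem abs_sub_le_of_piecewise_affine {a b M : ℝ} (hF : ContinuousOn F (Ici 0))
    (hlin : ∀ j s t, e (j - 2) ≤ s → s ≤ t → t ≤ e (j - 1) → F t - F s = σ j * (t - s))
    (hcover : ∀ t, 0 < t → ∃ j, e (j - 2) ≤ t ∧ t < e (j - 1))
    (hσ : ∀ j, e (j - 2) < b → |σ j| ≤ M) (ha : 0 ≤ a) (hab : a ≤ b) :
    |F b - F a| ≤ M * (b - a) := by
  refine abs_sub_le_of_forall_hasDerivWithinAt_Ici hab (hF.mono fun x hx => ha.trans hx.1)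
    fun x hx => ?_
  obtain ⟨j, hj₁, hj₂⟩ := hcover x (ha.trans_lt hx.1)
  exact ⟨σ j, hasDerivWithinAt_Ici_of_sub_eq_mul hj₂ fun u hu => hlin j x u hj₁ hu.1 hu.2,
    hσ j (hj₁.trans_lt hx.2)⟩

end PiecewiseAffine

noncomputable def penSlope (S : ℤ → ℝ) (L : ℝ) (e : ℤ → ℝ) (k : ℤ) : ℝ :=
  S k + 3 * L * (e (k - 2) / e (k - 1))

section PenSlope

variable {S : ℤ → ℝ} {L : ℝ} {e : ℤ → ℝ} {k : ℤ}

theorem penSlope_nonneg (hS : 0 ≤ S k) (hL : 0 ≤ L) (he : ∀ k, 0 < e k) :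
    0 ≤ penSlope S L e k := by
  have := he (k - 2); have := he (k - 1)
  unfold penSlope; positivity

theorem penSlope_le (hS : S k ≤ L) (hL : 0 ≤ L) (hstep : 3 * e (k - 2) ≤ e (k - 1))
    (he : ∀ k, 0 < e k) : penSlope S L e k ≤ 2 * L := by
  have hr : e (k - 2) / e (k - 1) ≤ 1 / 3 := by
    rw [div_le_iff₀ (he _)]; linarith
  unfold penSlope; nlinarith [mul_le_mul_of_nonneg_left hr hL]

theorem penSlope_mono (hS : Monotone S) (hL : 0 ≤ L)
    (hr : Monotone fun k => e (k - 2) / e (k - 1)) : Monotone (penSlope S L e) :=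
  fun _ _ h => add_le_add (hS h) (mul_le_mul_of_nonneg_left (hr h) (by positivity))

end PenSlope

theorem mul_le_of_penSlope_affine {F : ℝ → ℝ} {S : ℤ → ℝ} {L : ℝ} {e : ℤ → ℝ} {k : ℤ} {t : ℝ}
    (hlin : ∀ j s t, e (j - 2) ≤ s → s ≤ t → t ≤ e (j - 1) →
      F t - F s = penSlope S L e j * (t - s))
    (hF : 0 ≤ F (e (k - 3))) (he : ∀ k, 0 < e k) (hstep : 3 * e (k - 3) ≤ e (k - 2))
    (hS : S (k - 1) ≤ S k) (hSL : S (k - 1) ≤ L) (hL : 0 ≤ L)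
    (ht₁ : e (k - 2) ≤ t) (ht₂ : t ≤ e (k - 1)) : S (k - 1) * t ≤ F t := by
  have hupper := hlin k (e (k - 2)) t le_rfl ht₁ ht₂
  have hlower := hlin (k - 1) (e (k - 3)) (e (k - 2)) (by rw [show k - 1 - 2 = k - 3 by ring])
    (by linarith [he (k - 3)]) (by rw [show k - 1 - 1 = k - 2 by ring])
  rw [penSlope] at hupper hlower
  rw [show k - 1 - 2 = k - 3 by ring, show k - 1 - 1 = k - 2 by ring] at hlower
  have he₃ := he (k - 3)
  have hρe : e (k - 3) / e (k - 2) * e (k - 2) = e (k - 3) := div_mul_cancel₀ _ (he _).ne'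
  have hρ : e (k - 3) / e (k - 2) ≤ 1 / 3 := by rw [div_le_iff₀ (he _)]; linarith
  have hupper_piece : S (k - 1) * (t - e (k - 2)) ≤ F t - F (e (k - 2)) := by
    have : 0 ≤ 3 * L * (e (k - 2) / e (k - 1)) :=
      mul_nonneg (by linarith) (div_nonneg (he _).le (he _).le)
    rw [hupper]
    exact mul_le_mul_of_nonneg_right (by linarith) (by linarith)
  -- the extra slope `3 L e (k - 3) / e (k - 2)` on the lower piece pays for the stretch
  -- `[0, e (k - 3)]`, where only `0 ≤ F` is known
  have hlower_piece : S (k - 1) * e (k - 2) ≤ F (e (k - 2)) - F (e (k - 3)) := by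
    rw [hlower]
    nlinarith [mul_le_mul_of_nonneg_right hSL he₃.le,
      mul_le_mul_of_nonneg_left hρ (mul_nonneg hL he₃.le)]
  linarith

section Construction

variable {X : Type*} [MetricSpace X]

def slopeBounds (C : Set X) (g : X → ℝ) (x : X) (r : ℝ) : Set ℝ :=
  {ℓ | 0 ≤ ℓ ∧ ∀ z ∈ C, dist z x < r → max (g x - g z) 0 ≤ ℓ * dist x z}

/-- The paper's `S_k^-(x)`. -/
noncomputable def descSlope (C : Set X) (g : X → ℝ) (e : ℤ → ℝ) (x : X) (k : ℤ) : ℝ :=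
  sInf (slopeBounds C g x (e k))

section DescSlope

variable {C : Set X} {g : X → ℝ} {e : ℤ → ℝ} {x : X} {k : ℤ}

theorem mem_slopeBounds_of_lipschitz {L r : ℝ} (hL : 0 ≤ L)
    (hg : ∀ z ∈ C, |g x - g z| ≤ L * dist x z) : L ∈ slopeBounds C g x r :=
  ⟨hL, fun z hz _ => max_le ((le_abs_self _).trans (hg z hz)) (by positivity)⟩

theorem descSlope_nonneg : 0 ≤ descSlope C g e x k :=
  Real.sInf_nonneg fun _ h => h.1

theorem descSlope_le {ℓ : ℝ} (h : ℓ ∈ slopeBounds C g x (e k)) : descSlope C g e x k ≤ ℓ :=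
  csInf_le ⟨0, fun _ h => h.1⟩ h

theorem descSlope_mono (hne : ∀ k, (slopeBounds C g x (e k)).Nonempty) (he : Monotone e) :
    Monotone (descSlope C g e x) := fun _ b hab =>
  csInf_le_csInf ⟨0, fun _ h => h.1⟩ (hne b)
    fun _ ⟨h₀, h⟩ => ⟨h₀, fun z hz hzx => h z hz (hzx.trans_le (he hab))⟩

theorem sub_le_descSlope_mul (hne : (slopeBounds C g x (e k)).Nonempty) {z : X} (hz : z ∈ C)
    (hzx : dist z x < e k) : g x - g z ≤ descSlope C g e x k * dist x z := by
  rcases eq_or_ne x z with rfl | hxz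
  · simp
  have hd := dist_pos.2 hxz
  rw [← div_le_iff₀ hd]
  exact le_csInf hne fun ℓ ⟨_, h⟩ => (div_le_iff₀ hd).2 ((le_max_left _ _).trans (h z hz hzx))

end DescSlope

section Penalty

variable {C : Set X} {g : X → ℝ} {L : ℝ} {e : ℤ → ℝ} {x : X} {S : ℤ → ℝ} {pen : ℝ → ℝ}

theorem sub_le_pen_dist (hL : 0 ≤ L) (hg : ∀ z ∈ C, |g x - g z| ≤ L * dist x z)
    (he : ∀ k, 0 < e k) (hstep : ∀ k, 3 * e (k - 1) ≤ e k)
    (hS : ∀ k, S k = descSlope C g e x k) (hpen0 : pen 0 = 0)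
    (hpennonneg : ∀ t, 0 ≤ t → 0 ≤ pen t)
    (hpenlin : ∀ k s t, e (k - 2) ≤ s → s ≤ t → t ≤ e (k - 1) →
      pen t - pen s = penSlope S L e k * (t - s))
    {w : X} (hw : w ∈ C) : g x - g w ≤ pen (dist x w) := by
  obtain rfl : S = descSlope C g e x := funext hS
  rcases eq_or_ne x w with rfl | hxw
  · simp [hpen0]
  have hLmem : ∀ r, L ∈ slopeBounds C g x r := fun _ => mem_slopeBounds_of_lipschitz hL hg
  obtain ⟨k, hk₁, hk₂⟩ :=
    exists_mem_Ico_of_mul_le_succ he (by norm_num) hstep (dist_pos.2 hxw)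
  calc g x - g w ≤ descSlope C g e x (k - 1) * dist x w :=
        sub_le_descSlope_mul ⟨L, hLmem _⟩ hw (by rwa [dist_comm])
    _ ≤ pen (dist x w) :=
        mul_le_of_penSlope_affine hpenlin (hpennonneg _ (he _).le) he
          (by convert hstep (k - 2) using 3; ring)
          (descSlope_mono (fun _ => ⟨L, hLmem _⟩)
            (monotone_of_mul_le_succ he (by norm_num) hstep) (by omega))
          (descSlope_le (hLmem _)) hL hk₁ hk₂.le

theorem abs_pen_sub_le (hL : 0 ≤ L) (hg : ∀ z ∈ C, |g x - g z| ≤ L * dist x z)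
    (he : ∀ k, 0 < e k) (hstep : ∀ k, 3 * e (k - 1) ≤ e k)
    (hS : ∀ k, S k = descSlope C g e x k) (hpencont : ContinuousOn pen (Ici 0))
    (hpenlin : ∀ k s t, e (k - 2) ≤ s → s ≤ t → t ≤ e (k - 1) →
      pen t - pen s = penSlope S L e k * (t - s))
    {a b : ℝ} (ha : 0 ≤ a) (hb : 0 ≤ b) : |pen b - pen a| ≤ 2 * L * |b - a| := by
  obtain rfl : S = descSlope C g e x := funext hS
  have hslope : ∀ j, |penSlope (descSlope C g e x) L e j| ≤ 2 * L := fun j => by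
    have h₀ : 0 ≤ penSlope (descSlope C g e x) L e j := penSlope_nonneg descSlope_nonneg hL he
    exact abs_le.2 ⟨by linarith, penSlope_le (descSlope_le (mem_slopeBounds_of_lipschitz hL hg))
      hL (by convert hstep (j - 1) using 3; ring) he⟩
  have hcover := fun t (ht : 0 < t) => exists_mem_Ico_of_mul_le_succ he (by norm_num) hstep ht
  rcases le_total a b with hab | hba
  · rw [abs_of_nonneg (sub_nonneg.2 hab)]
    exact abs_sub_le_of_piecewise_affine hpencont hpenlin hcover (fun j _ => hslope j) ha hab
  · rw [abs_sub_comm, abs_sub_comm b, abs_of_nonneg (sub_nonneg.2 hba)]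
    exact abs_sub_le_of_piecewise_affine hpencont hpenlin hcover (fun j _ => hslope j) hb hba

theorem pen_le_penSlope_mul (hL : 0 ≤ L) (hg : ∀ z ∈ C, |g x - g z| ≤ L * dist x z)
    (he : ∀ k, 0 < e k) (hstep : ∀ k, 3 * e (k - 1) ≤ e k)
    (hratio : Monotone fun k => e (k - 2) / e (k - 1))
    (hS : ∀ k, S k = descSlope C g e x k) (hpen0 : pen 0 = 0)
    (hpencont : ContinuousOn pen (Ici 0))
    (hpenlin : ∀ k s t, e (k - 2) ≤ s → s ≤ t → t ≤ e (k - 1) →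
      pen t - pen s = penSlope S L e k * (t - s))
    {k : ℤ} {t : ℝ} (ht₀ : 0 ≤ t) (ht : t < e (k - 1)) : pen t ≤ penSlope S L e k * t := by
  obtain rfl : S = descSlope C g e x := funext hS
  have hemono := monotone_of_mul_le_succ he (by norm_num) hstep
  have hslope_mono : Monotone (penSlope (descSlope C g e x) L e) :=
    penSlope_mono (descSlope_mono (fun _ => ⟨L, mem_slopeBounds_of_lipschitz hL hg⟩) hemono)
      hL hratio
  have hslope : ∀ j, e (j - 2) < t → |penSlope (descSlope C g e x) L e j| ≤
      penSlope (descSlope C g e x) L e k := fun j hj => by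
    rw [abs_of_nonneg (penSlope_nonneg descSlope_nonneg hL he)]
    exact hslope_mono (by linarith [hemono.reflect_lt (hj.trans ht)])
  have := abs_sub_le_of_piecewise_affine hpencont hpenlin
    (fun t ht => exists_mem_Ico_of_mul_le_succ he (by norm_num) hstep ht) hslope le_rfl ht₀
  rw [hpen0, sub_zero, sub_zero] at this
  exact (le_abs_self _).trans this

end Penalty

section Extension

variable {C : Set X} {g : X → ℝ} {pen : X → ℝ → ℝ} {x : X}

theorem sSup_sub_pen_le (hx : x ∈ C) (hext : ∀ z ∈ C, g z - g x ≤ pen z (dist z x)) :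
    sSup ((fun z => g z - pen z (dist z x)) '' C) ≤ g x :=
  csSup_le (Set.Nonempty.image _ ⟨x, hx⟩) (forall_mem_image.2 fun z hz => by linarith [hext z hz])

theorem bddAbove_image_sub_pen {K : ℝ} (hK : 0 ≤ K)
    (hext : ∀ z ∈ C, g z - g x ≤ pen z (dist z x))
    (hlip : ∀ z ∈ C, ∀ a b, 0 ≤ a → 0 ≤ b → |pen z b - pen z a| ≤ K * |b - a|) (y : X) :
    BddAbove ((fun z => g z - pen z (dist z y)) '' C) := by
  refine ⟨g x + K * dist x y, forall_mem_image.2 fun z hz => ?_⟩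
  have hd : |dist z x - dist z y| ≤ dist x y := by
    simpa only [dist_comm z] using abs_dist_sub_le x y z
  have := hlip z hz (dist z y) (dist z x) dist_nonneg dist_nonneg
  nlinarith [hext z hz, abs_le.1 this, mul_le_mul_of_nonneg_left hd hK]

end Extension

end Construction

theorem descending_incremental_ratio_upper_bound_general
    {X : Type*} [MetricSpace X] (C : Set X)
    (g : X → ℝ) (L ε : ℝ) (hL : 0 < L) (hε : 0 < ε)
    (hg : ∀ x ∈ C, ∀ y ∈ C, |g x - g y| ≤ L * dist x y)
    (e : ℤ → ℝ) (he : ∀ k : ℤ, 0 < e k)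
    (hmono : ∀ k : ℤ, e (k - 1) / e k ≤ e k / e (k + 1))
    (hratio : ∀ k : ℤ, e (k - 1) / e k ≤ ε / (3 * (L + ε)))
    (S : X → ℤ → ℝ)
    (hS : ∀ x ∈ C, ∀ k : ℤ,
      S x k = sInf {ℓ : ℝ | 0 ≤ ℓ ∧ ∀ z ∈ C, dist z x < e k → max (g x - g z) 0 ≤ ℓ * dist x z})
    (pen : X → ℝ → ℝ)
    (hpen0 : ∀ x ∈ C, pen x 0 = 0)
    (hpennonneg : ∀ x ∈ C, ∀ t : ℝ, 0 ≤ t → 0 ≤ pen x t)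
    (hpencont : ∀ x ∈ C, ContinuousOn (pen x) (Set.Ici 0))
    (hpenlin : ∀ x ∈ C, ∀ k : ℤ, ∀ s t : ℝ, e (k - 2) ≤ s → s ≤ t → t ≤ e (k - 1) →
      pen x t - pen x s = (S x k + 3 * L * (e (k - 2) / e (k - 1))) * (t - s))
    (f : X → ℝ)
    (hf : ∀ y : X, f y = sSup ((fun x => g x - pen x (dist x y)) '' C))
    (xb : X) (hxb : xb ∈ C) (y : X) (k : ℤ)
    (hd2 : dist xb y < e (k - 1)) :
    max (f xb - f y) 0 / dist xb y ≤ S xb k + 3 * L * (e (k - 2) / e (k - 1)) := by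
  have hstep : ∀ k, 3 * e (k - 1) ≤ e k := fun k =>
    three_mul_le_of_div_le (he k) hL.le hε (hratio k)
  have hratio_mono : Monotone fun k => e (k - 2) / e (k - 1) :=
    monotone_int_of_le_succ fun k => by
      simpa [show k + 1 - 2 = k - 1 by ring, show k - 1 - 1 = k - 2 by ring] using hmono (k - 1)
  have hext : ∀ x ∈ C, ∀ w ∈ C, g x - g w ≤ pen x (dist x w) := fun x hx w hw =>
    sub_le_pen_dist hL.le (hg x hx) he hstep (hS x hx) (hpen0 x hx) (hpennonneg x hx)
      (hpenlin x hx) hw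
  have hlip : ∀ x ∈ C, ∀ a b, 0 ≤ a → 0 ≤ b → |pen x b - pen x a| ≤ 2 * L * |b - a| :=
    fun x hx _ _ => abs_pen_sub_le hL.le (hg x hx) he hstep (hS x hx) (hpencont x hx)
      (hpenlin x hx)
  have hfx : f xb ≤ g xb := hf xb ▸ sSup_sub_pen_le hxb fun z hz => hext z hz xb hxb
  have hfy : g xb - pen xb (dist xb y) ≤ f y := hf y ▸
    le_csSup (bddAbove_image_sub_pen (by positivity) (fun z hz => hext z hz xb hxb) hlip y)
      ⟨xb, hxb, rfl⟩
  have hpen : pen xb (dist xb y) ≤ (S xb k + 3 * L * (e (k - 2) / e (k - 1))) * dist xb y :=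
    pen_le_penSlope_mul hL.le (hg xb hxb) he hstep hratio_mono (hS xb hxb) (hpen0 xb hxb)
      (hpencont xb hxb) (hpenlin xb hxb) dist_nonneg hd2
  have hslope : 0 ≤ penSlope (S xb) L e k :=
    penSlope_nonneg ((hS xb hxb k).trans_ge descSlope_nonneg) hL.le he
  exact div_le_of_le_mul₀ dist_nonneg hslope
    (max_le (by linarith) (mul_nonneg hslope dist_nonneg))

/-- In the descending-slope extension construction, if `x̄ ∈ C`, `y ∈ X` and
`ε_{k−2} ≤ d(x̄,y) < ε_{k−1}`, then
`(f(y) − f(x̄))₋ / d(x̄,y) ≤ S_k^−(x̄) + 3L·ε_{k−2}/ε_{k−1}`. -/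
theorem descending_incremental_ratio_upper_bound
    {X : Type*} [MetricSpace X] (C : Set X) (hC : C.Nonempty)
    (g : X → ℝ) (L ε : ℝ) (hL : 0 < L) (hε : 0 < ε) (hεL : ε ≤ L)
    (hg : ∀ x ∈ C, ∀ y ∈ C, |g x - g y| ≤ L * dist x y)
    (e : ℤ → ℝ) (he : ∀ k : ℤ, 0 < e k)
    (hmono : ∀ k : ℤ, e (k - 1) / e k ≤ e k / e (k + 1))
    (hlim : Filter.Tendsto (fun k : ℤ => e (k - 1) / e k) Filter.atBot (nhds 0))
    (hratio : ∀ k : ℤ, e (k - 1) / e k ≤ ε / (3 * (L + ε)))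
    (S : X → ℤ → ℝ)
    (hS : ∀ x ∈ C, ∀ k : ℤ,
      S x k = sInf {ℓ : ℝ | 0 ≤ ℓ ∧ ∀ z ∈ C, dist z x < e k → max (g x - g z) 0 ≤ ℓ * dist x z})
    (pen : X → ℝ → ℝ)
    (hpen0 : ∀ x ∈ C, pen x 0 = 0)
    (hpennonneg : ∀ x ∈ C, ∀ t : ℝ, 0 ≤ t → 0 ≤ pen x t)
    (hpencont : ∀ x ∈ C, ContinuousOn (pen x) (Set.Ici 0))
    (hpenlin : ∀ x ∈ C, ∀ k : ℤ, ∀ s t : ℝ, e (k - 2) ≤ s → s ≤ t → t ≤ e (k - 1) →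
      pen x t - pen x s = (S x k + 3 * L * (e (k - 2) / e (k - 1))) * (t - s))
    (f : X → ℝ)
    (hf : ∀ y : X, f y = sSup ((fun x => g x - pen x (dist x y)) '' C))
    (xb : X) (hxb : xb ∈ C) (y : X) (k : ℤ)
    (hd1 : e (k - 2) ≤ dist xb y) (hd2 : dist xb y < e (k - 1)) :
    max (f xb - f y) 0 / dist xb y ≤ S xb k + 3 * L * (e (k - 2) / e (k - 1)) :=
  descending_incremental_ratio_upper_bound_general C g L ε hL hε hg e he hmono hratio S hS pen hpen0
    hpennonneg hpencont hpenlin f hf xb hxb y k hd2
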